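/- Let G be a finite group and k a field whose characteristic does not divide |G|, and let R = kG be embedded in the Drinfeld double H = D(G) as the subalgebra 1_{(kG)*} ⋈ kG. Then the quotient module Q = H/R⁺H, with dim_k Q = |G|, is isomorphic as a right G-module to kG_ad, the group algebra under the right adjoint action; explicitly, the coset of p_y ⋈ h maps to p_{h⁻¹yh}, and (kG)*_ad ≅ kG_ad via p_g ↦ g. -/

import Mathlib

set_option linter.unusedSectionVars false

namespace GroupModDepth

open MulOpposite TensorProduct

universe u

variable (k G : Type u) [Field k] [Group G]

/-- A right `G`-module (`k`-linear representation of `G` by right operators):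
a `k`-vector space with a monoid homomorphism `G →* (End_k V)ᵐᵒᵖ`. -/
structure GVec : Type (u+1) where
  V : Type u
  [acg : AddCommGroup V]
  [mod : Module k V]
  σ : G →* (Module.End k V)ᵐᵒᵖ

attribute [instance] GVec.acg GVec.mod

variable {k G}

/-- The action of `g` on a right `G`-module, as a `k`-linear endomorphism. -/
def GVec.act (W : GVec k G) (g : G) : Module.End k W.V := unop (W.σ g)

/-- Tensor product of right `G`-modules with the diagonal action. -/
noncomputable def GVec.tmul (M N : GVec k G) : GVec k G where
  V := TensorProduct k M.V N.V
  σ :=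
  { toFun := fun g => op (TensorProduct.map (M.act g) (N.act g))
    map_one' := by
      apply unop_injective
      refine LinearMap.ext fun v => ?_
      simp only [GVec.act, map_one, unop_one, unop_op]
      rw [show ((1 : Module.End k M.V)) = LinearMap.id from rfl,
        show ((1 : Module.End k N.V)) = LinearMap.id from rfl, TensorProduct.map_id]
      rfl
    map_mul' := fun g h => by
      apply unop_injective
      simp only [GVec.act, map_mul, unop_mul, unop_op, Module.End.mul_eq_comp,
        TensorProduct.map_comp] }

/-- The trivial right `G`-module `k`. -/
def GVec.triv : GVec k G where
  V := k
  σ := 1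

/-- Direct sum (finite product) of right `G`-modules. -/
noncomputable def GVec.pi {m : ℕ} (F : Fin m → GVec k G) : GVec k G where
  V := ∀ i, (F i).V
  σ :=
  { toFun := fun g => op (LinearMap.pi (fun i => ((F i).act g).comp (LinearMap.proj i)))
    map_one' := by
      apply unop_injective
      exact LinearMap.ext fun v => funext fun i => by simp [GVec.act]
    map_mul' := fun g h => by
      apply unop_injective
      refine LinearMap.ext fun v => funext fun i => ?_
      simp [GVec.act, Module.End.mul_eq_comp] }

/-- `q` copies of a right `G`-module. -/
noncomputable def GVec.copies (q : ℕ) (N : GVec k G) : GVec k G := GVec.pi (fun _ : Fin q => N)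

/-- Tensor powers: `tpow W n = W^{⊗(n+1)}` with the diagonal `G`-action. -/
noncomputable def GVec.tpow (W : GVec k G) : ℕ → GVec k G
  | 0 => W
  | n+1 => (W.tpow n).tmul W

/-- `Tsum W n = T_{n+1}(W) = W ⊕ W^{⊗2} ⊕ ⋯ ⊕ W^{⊗(n+1)}`. -/
noncomputable def GVec.Tsum (W : GVec k G) (n : ℕ) : GVec k G :=
  GVec.pi (fun i : Fin (n+1) => W.tpow i)

/-- `M | N`: `M` is isomorphic to a direct summand of `N` as right `G`-modules
(equivalently, as `kG`-modules). -/
def GVec.Dvd (M N : GVec k G) : Prop :=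
  ∃ (f : M.V →ₗ[k] N.V) (g : N.V →ₗ[k] M.V),
    (∀ (x : G) v, f (M.act x v) = N.act x (f v)) ∧
    (∀ (x : G) w, g (N.act x w) = M.act x (g w)) ∧
    (∀ v, g (f v) = v)

/-- Isomorphism of right `G`-modules. -/
def GVec.Iso (M N : GVec k G) : Prop :=
  ∃ (f : M.V →ₗ[k] N.V) (g : N.V →ₗ[k] M.V),
    (∀ (x : G) v, f (M.act x v) = N.act x (f v)) ∧
    (∀ (x : G) w, g (N.act x w) = M.act x (g w)) ∧
    (∀ v, g (f v) = v) ∧ (∀ w, f (g w) = w)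

/-- A right `G`-module `W` (equivalently, `kG`-module) has depth `n`. -/
def GVec.hasDepth (W : GVec k G) : ℕ → Prop
  | 0 => ∃ q, W.Iso (GVec.copies q (GVec.triv (k := k) (G := G)))
  | n+1 => ∃ q, (W.Tsum (n+1)).Dvd (GVec.copies q (W.Tsum n))

/-- The minimum depth `d(W, 𝓜_{kG})` of `W` as a `kG`-module. -/
noncomputable def GVec.minDepth (W : GVec k G) : ℕ∞ :=
  sInf {m : ℕ∞ | ∃ j : ℕ, m = j ∧ W.hasDepth j}

/-- The action of the group algebra `kG` on a right `G`-module `W`. -/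
noncomputable def GVec.aact (W : GVec k G) : MonoidAlgebra k G →ₗ[k] Module.End k W.V :=
  Finsupp.linearCombination k (fun g => W.act g) ∘ₗ (MonoidAlgebra.coeffLinearEquiv k).toLinearMap

/-- `W` is a faithful `kG`-module: its annihilator in `kG` is zero. -/
def GVec.Faithful (W : GVec k G) : Prop := ∀ c : MonoidAlgebra k G, W.aact c = 0 → c = 0

/-- `ℓ_W`: the least `n ≥ 1` such that `W^{⊗n}` is a faithful `kG`-module. -/
noncomputable def GVec.ell (W : GVec k G) : ℕ :=
  sInf {n : ℕ | ∃ m, n = m + 1 ∧ (W.tpow m).Faithful}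

end GroupModDepth

namespace GroupModDepth

open MulOpposite TensorProduct

universe u

variable (k G : Type u) [Field k] [Group G]

/-- Conjugation `x ↦ g⁻¹ x g` on the group algebra, extended `k`-linearly. -/
noncomputable def adEnd (g : G) : Module.End k (MonoidAlgebra k G) :=
  MonoidAlgebra.mapDomainLinearMap k k (fun x => g⁻¹ * x * g)

lemma adEnd_single (g x : G) (b : k) :
    adEnd k G g (MonoidAlgebra.single x b) = MonoidAlgebra.single (g⁻¹ * x * g) b :=
  MonoidAlgebra.mapDomain_single

/-- The group algebra `kG` as a right `G`-module under the adjoint action `x · g = g⁻¹ x g`: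
the module `kG_ad` (isomorphic to `Q = D(G)/(kG)⁺D(G)`). -/
noncomputable def adRep : GVec k G where
  V := MonoidAlgebra k G
  σ :=
  { toFun := fun g => op (adEnd k G g)
    map_one' := by
      apply unop_injective
      refine MonoidAlgebra.lhom_ext' fun x => LinearMap.ext fun b => ?_
      simp only [LinearMap.comp_apply, MonoidAlgebra.lsingle_apply, unop_op, unop_one,
        adEnd_single, Module.End.one_apply]
      simp
    map_mul' := fun g h => by
      apply unop_injective
      refine MonoidAlgebra.lhom_ext' fun x => LinearMap.ext fun b => ?_
      simp only [LinearMap.comp_apply, MonoidAlgebra.lsingle_apply, unop_op, unop_mul,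
        Module.End.mul_apply, adEnd_single]
      simp [mul_assoc, mul_inv_rev] }

variable [DecidableEq G]

/-- Data exhibiting `D` as the Drinfeld double `D(G) = (kG)* ⋈ kG` of a finite group:
a linear equivalence `(G → k) ⊗ kG ≃ D` carrying the unit and satisfying the double's
multiplication rule `(p_x ⋈ g)(p_y ⋈ h) = p_x p_{gyg⁻¹} ⋈ gh` on the spanning set. -/
structure DoubleData (D : Type u) [Ring D] [Algebra k D] : Type u where
  e : ((G → k) ⊗[k] MonoidAlgebra k G) ≃ₗ[k] D
  unit : e ((1 : G → k) ⊗ₜ[k] (1 : MonoidAlgebra k G)) = 1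
  mul : ∀ x y g h : G,
    e (Pi.single x (1:k) ⊗ₜ[k] (MonoidAlgebra.of k G g)) *
      e (Pi.single y (1:k) ⊗ₜ[k] (MonoidAlgebra.of k G h))
    = e ((Pi.single x (1:k) * Pi.single (g * y * g⁻¹) (1:k)) ⊗ₜ[k]
        (MonoidAlgebra.of k G (g * h)))

variable {k G}
variable {D : Type u} [Ring D] [Algebra k D]

/-- The embedding `kG → D(G)`, `z ↦ 1 ⋈ z`. -/
noncomputable def DoubleData.emb (dd : DoubleData k G D) : MonoidAlgebra k G →ₗ[k] D :=
  dd.e.toLinearMap ∘ₗ (TensorProduct.mk k (G → k) (MonoidAlgebra k G)) (1 : G → k)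

/-- The subspace `(kG)⁺D(G)` of `D(G)`. -/
noncomputable def DoubleData.QI (dd : DoubleData k G D) : Submodule k D :=
  Submodule.span k {z : D | ∃ (c : MonoidAlgebra k G) (d : D),
    (c.coeff.sum fun _ a => a) = 0 ∧ z = dd.emb c * d}

/-- The quotient module `Q = D(G)/(kG)⁺D(G)`. -/
def DoubleData.Qcar (dd : DoubleData k G D) : Type u := D ⧸ dd.QI

noncomputable instance (dd : DoubleData k G D) : AddCommGroup dd.Qcar :=
  inferInstanceAs (AddCommGroup (D ⧸ dd.QI))
noncomputable instance (dd : DoubleData k G D) : Module k dd.Qcar :=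
  inferInstanceAs (Module k (D ⧸ dd.QI))

/-- The class of an element of `D(G)` in `Q`. -/
noncomputable def DoubleData.Qmk (dd : DoubleData k G D) (d : D) : dd.Qcar := Submodule.Quotient.mk d

lemma DoubleData.QIle (dd : DoubleData k G D) (d' : D) :
    dd.QI ≤ dd.QI.comap (LinearMap.mulRight k d') := by
  rw [DoubleData.QI, Submodule.span_le]
  rintro z ⟨c, d, hc, rfl⟩
  simp only [SetLike.mem_coe, Submodule.mem_comap, LinearMap.mulRight_apply]
  exact Submodule.subset_span ⟨c, d * d', hc, (mul_assoc _ d d')⟩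

/-- Right multiplication by an element of `D(G)` descends to `Q`. -/
noncomputable def DoubleData.Qact (dd : DoubleData k G D) (d' : D) :
    dd.Qcar →ₗ[k] dd.Qcar :=
  Submodule.mapQ _ _ (LinearMap.mulRight k d') (dd.QIle d')

end GroupModDepth

/-! The linear map `D(G) → kG`, `p_y ⋈ h ↦ h⁻¹yh`, takes the same value on
`(1 ⋈ g)(p_y ⋈ h) = p_{gyg⁻¹} ⋈ gh` as on `p_y ⋈ h`, so it kills `(kG)⁺D(G)` and descends to `Q`.
Conversely `p_y ⋈ h ≡ p_{h⁻¹yh} ⋈ 1` modulo `(kG)⁺D(G)`, the difference being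
`(h - 1)(p_{h⁻¹yh} ⋈ 1)`, so `w ↦ [p_w ⋈ 1]` is an inverse. Right multiplication by `1 ⋈ g`
sends `p_y ⋈ h` to `p_y ⋈ hg`, which becomes conjugation by `g` on `kG`. -/

namespace GroupModDepth

open TensorProduct

lemma sum_pi_single_one {ι R : Type*} [Fintype ι] [DecidableEq ι] [AddCommMonoidWithOne R] :
    ∑ i : ι, Pi.single i (1 : R) = 1 :=
  Finset.univ_sum_single 1

section

variable {k G : Type*} [Semiring k] [Finite G]

variable (k G) in
noncomputable def funEquivAd : (G → k) ≃ₗ[k] MonoidAlgebra k G :=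
  (Pi.basisFun k G).equiv (MonoidAlgebra.basis G k) (Equiv.refl G)

lemma funEquivAd_single [DecidableEq G] (g : G) :
    funEquivAd k G (Pi.single g 1) = MonoidAlgebra.single g 1 := by
  rw [← Pi.basisFun_apply, funEquivAd, Module.Basis.equiv_apply]
  rfl

end

lemma funEquivAd_comp_conj {k G : Type u} [Field k] [Group G] [Finite G] [DecidableEq G]
    (g : G) (f : G → k) :
    funEquivAd k G (fun x => f (g * x * g⁻¹)) = adEnd k G g (funEquivAd k G f) := by
  suffices (funEquivAd k G).toLinearMap ∘ₗ LinearMap.funLeft k k (MulAut.conj g)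
      = adEnd k G g ∘ₗ (funEquivAd k G).toLinearMap from LinearMap.congr_fun this f
  refine (Pi.basisFun k G).ext fun y => ?_
  have hconj :
      LinearMap.funLeft k k (MulAut.conj g) (Pi.single y 1) = Pi.single (g⁻¹ * y * g) 1 := by
    change Pi.single y 1 ∘ (MulAut.conj g).toEquiv = _
    rw [Pi.single_comp_equiv]
    simp [MulAut.conj_symm_apply]
  simp only [LinearMap.comp_apply, Pi.basisFun_apply, LinearEquiv.coe_coe, hconj,
    funEquivAd_single, adEnd_single]

variable {k G D : Type u} [Field k] [Group G] [DecidableEq G] [Ring D] [Algebra k D]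

namespace DoubleData

variable (dd : DoubleData k G D)

noncomputable def basis [Finite G] : Module.Basis (G × G) k D :=
  ((Pi.basisFun k G).tensorProduct (MonoidAlgebra.basis G k)).map dd.e

lemma basis_apply [Finite G] (y h : G) :
    dd.basis (y, h) = dd.e (Pi.single y 1 ⊗ₜ MonoidAlgebra.of k G h) := by
  simp [basis, MonoidAlgebra.of_apply]

variable [Fintype G]

lemma emb_of_eq_sum (g : G) : dd.emb (MonoidAlgebra.of k G g) = ∑ x : G, dd.basis (x, g) := by
  rw [emb, LinearMap.comp_apply, TensorProduct.mk_apply, ← sum_pi_single_one, sum_tmul, map_sum]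
  simp only [basis_apply, LinearEquiv.coe_coe]

lemma emb_of_mul_basis (g y h : G) :
    dd.emb (MonoidAlgebra.of k G g) * dd.basis (y, h) = dd.basis (g * y * g⁻¹, g * h) := by
  simp_rw [emb_of_eq_sum, Finset.sum_mul, basis_apply, dd.mul]
  rw [← map_sum, ← sum_tmul, ← Finset.sum_mul, sum_pi_single_one, one_mul]

lemma basis_mul_emb_of (g y h : G) :
    dd.basis (y, h) * dd.emb (MonoidAlgebra.of k G g) = dd.basis (y, h * g) := by
  have hconj : ∑ x : G, (Pi.single (h * x * h⁻¹) (1 : k) : G → k) = 1 := by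
    rw [← sum_pi_single_one]
    exact Fintype.sum_equiv (MulAut.conj h).toEquiv _ _ fun _ => rfl
  simp_rw [emb_of_eq_sum, Finset.mul_sum, basis_apply, dd.mul]
  rw [← map_sum, ← sum_tmul, ← Finset.mul_sum, hconj, mul_one]

noncomputable def adProj : D →ₗ[k] MonoidAlgebra k G :=
  dd.basis.constr k fun p => MonoidAlgebra.single (p.2⁻¹ * p.1 * p.2) 1

lemma adProj_basis (y h : G) :
    dd.adProj (dd.basis (y, h)) = MonoidAlgebra.single (h⁻¹ * y * h) 1 :=
  dd.basis.constr_basis k _ _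

lemma adProj_emb_of_mul (g : G) (d : D) :
    dd.adProj (dd.emb (MonoidAlgebra.of k G g) * d) = dd.adProj d := by
  suffices dd.adProj ∘ₗ LinearMap.mulLeft k (dd.emb (MonoidAlgebra.of k G g)) = dd.adProj from
    LinearMap.congr_fun this d
  refine dd.basis.ext fun ⟨y, h⟩ => ?_
  simp only [LinearMap.comp_apply, LinearMap.mulLeft_apply, emb_of_mul_basis, adProj_basis]
  group

lemma adProj_mul_emb_of (g : G) (d : D) :
    dd.adProj (d * dd.emb (MonoidAlgebra.of k G g)) = adEnd k G g (dd.adProj d) := by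
  suffices dd.adProj ∘ₗ LinearMap.mulRight k (dd.emb (MonoidAlgebra.of k G g))
      = adEnd k G g ∘ₗ dd.adProj from LinearMap.congr_fun this d
  refine dd.basis.ext fun ⟨y, h⟩ => ?_
  simp only [LinearMap.comp_apply, LinearMap.mulRight_apply, basis_mul_emb_of, adProj_basis,
    adEnd_single]
  group

lemma adProj_emb_mul (c : MonoidAlgebra k G) (d : D) :
    dd.adProj (dd.emb c * d) = (c.coeff.sum fun _ a => a) • dd.adProj d := by
  induction c using MonoidAlgebra.induction_linear with
  | zero => simp
  | add c₁ c₂ h₁ h₂ =>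
    rw [map_add, add_mul, map_add, h₁, h₂, MonoidAlgebra.coeff_add,
      Finsupp.sum_add_index' (fun _ => rfl) (fun _ _ _ => rfl), add_smul]
  | single g b =>
    rw [← MonoidAlgebra.smul_of, map_smul, smul_mul_assoc, map_smul, adProj_emb_of_mul,
      MonoidAlgebra.smul_of, MonoidAlgebra.coeff_single, Finsupp.sum_single_index rfl]

lemma QI_le_ker_adProj : dd.QI ≤ LinearMap.ker dd.adProj := by
  rw [QI, Submodule.span_le]
  rintro _ ⟨c, d, hc, rfl⟩
  simp [adProj_emb_mul, hc]

noncomputable def quotientToAd : dd.Qcar →ₗ[k] MonoidAlgebra k G :=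
  dd.QI.liftQ dd.adProj dd.QI_le_ker_adProj

noncomputable def adToQuotient : MonoidAlgebra k G →ₗ[k] dd.Qcar :=
  (MonoidAlgebra.basis G k).constr k fun w => dd.Qmk (dd.basis (w, 1))

lemma Qmk_basis (y h : G) : dd.Qmk (dd.basis (y, h)) = dd.Qmk (dd.basis (h⁻¹ * y * h, 1)) := by
  refine (Submodule.Quotient.eq dd.QI).mpr (Submodule.subset_span ?_)
  refine ⟨MonoidAlgebra.of k G h - MonoidAlgebra.of k G 1, dd.basis (h⁻¹ * y * h, 1), ?_, ?_⟩
  · rw [MonoidAlgebra.coeff_sub, Finsupp.sum_sub_index (fun _ _ _ => rfl)]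
    simp only [MonoidAlgebra.of_apply, MonoidAlgebra.coeff_single, Finsupp.sum_single_index,
      sub_self]
  · rw [map_sub, sub_mul, emb_of_mul_basis, emb_of_mul_basis]
    group

lemma quotientToAd_Qmk (d : D) : dd.quotientToAd (dd.Qmk d) = dd.adProj d := rfl

lemma quotientToAd_comp_adToQuotient : dd.quotientToAd ∘ₗ dd.adToQuotient = LinearMap.id := by
  refine (MonoidAlgebra.basis G k).ext fun w => ?_
  rw [LinearMap.comp_apply, adToQuotient, Module.Basis.constr_basis, quotientToAd_Qmk,
    adProj_basis, LinearMap.id_apply, MonoidAlgebra.basis_apply]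
  group

lemma adToQuotient_comp_quotientToAd : dd.adToQuotient ∘ₗ dd.quotientToAd = LinearMap.id := by
  have h : dd.adToQuotient ∘ₗ dd.adProj = dd.QI.mkQ := dd.basis.ext fun ⟨y, h⟩ => by
    rw [LinearMap.comp_apply, adProj_basis, ← MonoidAlgebra.basis_apply, adToQuotient,
      Module.Basis.constr_basis]
    exact (dd.Qmk_basis y h).symm
  refine LinearMap.ext fun q => ?_
  obtain ⟨d, rfl⟩ := Submodule.Quotient.mk_surjective dd.QI q
  exact LinearMap.congr_fun h d

noncomputable def quotientEquivAd : dd.Qcar ≃ₗ[k] MonoidAlgebra k G :=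
  .ofLinearMap _ _ dd.quotientToAd_comp_adToQuotient dd.adToQuotient_comp_quotientToAd

lemma quotientEquivAd_Qmk (d : D) : dd.quotientEquivAd (dd.Qmk d) = dd.adProj d := rfl

lemma quotientEquivAd_Qact_emb_of (g : G) (q : dd.Qcar) :
    dd.quotientEquivAd (dd.Qact (dd.emb (MonoidAlgebra.of k G g)) q)
      = adEnd k G g (dd.quotientEquivAd q) := by
  obtain ⟨d, rfl⟩ := Submodule.Quotient.mk_surjective dd.QI q
  exact dd.adProj_mul_emb_of g d

lemma finrank_Qcar : Module.finrank k dd.Qcar = Fintype.card G :=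
  dd.quotientEquivAd.finrank_eq.trans (Module.finrank_eq_card_basis (MonoidAlgebra.basis G k))

end DoubleData

end GroupModDepth

open GroupModDepth TensorProduct in
theorem drinfeld_double_quotient_module_is_adjoint_module_general
    (k G D : Type u) [Field k] [Group G] [Fintype G] [DecidableEq G]
    [Ring D] [Algebra k D]
    (dd : DoubleData k G D) :
    Module.finrank k dd.Qcar = Fintype.card G ∧
    (∃ φ : dd.Qcar ≃ₗ[k] MonoidAlgebra k G,
      (∀ (g : G) (q : dd.Qcar),
        φ (dd.Qact (dd.e ((1 : G → k) ⊗ₜ[k] MonoidAlgebra.of k G g)) q)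
          = adEnd k G g (φ q)) ∧
      (∀ y h : G,
        φ (dd.Qmk (dd.e (Pi.single y (1:k) ⊗ₜ[k] MonoidAlgebra.of k G h)))
          = MonoidAlgebra.single (h⁻¹ * y * h) 1)) ∧
    (∃ ψ : (G → k) ≃ₗ[k] MonoidAlgebra k G,
      (∀ g : G, ψ (Pi.single g 1) = MonoidAlgebra.single g 1) ∧
      (∀ (g : G) (f : G → k), ψ (fun x => f (g * x * g⁻¹)) = adEnd k G g (ψ f))) := by
  refine ⟨dd.finrank_Qcar, ⟨dd.quotientEquivAd, dd.quotientEquivAd_Qact_emb_of, fun y h => ?_⟩,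
    ⟨funEquivAd k G, funEquivAd_single, funEquivAd_comp_conj⟩⟩
  rw [← dd.basis_apply, dd.quotientEquivAd_Qmk, dd.adProj_basis]

open GroupModDepth TensorProduct in
/-- for a finite group `G` and a field `k` with `char k ∤ |G|`, the quotient
module `Q = D(G)/(kG)⁺D(G)` of the Drinfeld double has `dim_k Q = |G|` and is isomorphic, as
a right `G`-module, to `kG_ad` (the group algebra under the right adjoint action), via
`p_y ⋈ h ↦ h⁻¹yh`; moreover `(kG)*_ad ≅ kG_ad` via `p_g ↦ g`. -/
theorem drinfeld_double_quotient_module_is_adjoint_module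
    (k G D : Type u) [Field k] [Group G] [Fintype G] [DecidableEq G]
    [Ring D] [Algebra k D]
    (hchar : (Fintype.card G : k) ≠ 0)
    (dd : DoubleData k G D) :
    Module.finrank k dd.Qcar = Fintype.card G ∧
    (∃ φ : dd.Qcar ≃ₗ[k] MonoidAlgebra k G,
      (∀ (g : G) (q : dd.Qcar),
        φ (dd.Qact (dd.e ((1 : G → k) ⊗ₜ[k] MonoidAlgebra.of k G g)) q)
          = adEnd k G g (φ q)) ∧
      (∀ y h : G,
        φ (dd.Qmk (dd.e (Pi.single y (1:k) ⊗ₜ[k] MonoidAlgebra.of k G h)))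
          = MonoidAlgebra.single (h⁻¹ * y * h) 1)) ∧
    (∃ ψ : (G → k) ≃ₗ[k] MonoidAlgebra k G,
      (∀ g : G, ψ (Pi.single g 1) = MonoidAlgebra.single g 1) ∧
      (∀ (g : G) (f : G → k), ψ (fun x => f (g * x * g⁻¹)) = adEnd k G g (ψ f))) :=
  drinfeld_double_quotient_module_is_adjoint_module_general k G D dd
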